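/- For any family 𝒯 of complete L-theories, RS(𝒯) = RS(Cl_E(𝒯)); moreover, if 𝒯 is nonempty and e-totally transcendental, then ds(𝒯) = ds(Cl_E(𝒯)). -/

import Mathlib

open FirstOrder Language Cardinal Set

universe u v w

variable {L : FirstOrder.Language.{u, v}}

/-- A complete theory: a satisfiable set of sentences containing each sentence or its
negation (`Theory.IsMaximal` in Mathlib). -/
abbrev CTheory (L : FirstOrder.Language.{u, v}) : Type max u v :=
  {T : L.Theory // T.IsMaximal}

/-- The neighbourhood `𝒯_φ = {T ∈ 𝒯 | φ ∈ T}`. -/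
def nbhd (𝒯 : Set (CTheory L)) (φ : L.Sentence) : Set (CTheory L) :=
  {T | T ∈ 𝒯 ∧ φ ∈ T.1}

/-- `T` is an accumulation point of `𝒯` if for every sentence `φ ∈ T` the set `𝒯_φ` is
infinite. -/
def IsAccPoint (𝒯 : Set (CTheory L)) (T : CTheory L) : Prop :=
  ∀ φ : L.Sentence, φ ∈ T.1 → (nbhd 𝒯 φ).Infinite

/-- The `E`-closure of `𝒯`: `𝒯` together with all its accumulation points. -/
def ClE (𝒯 : Set (CTheory L)) : Set (CTheory L) :=
  𝒯 ∪ {T | IsAccPoint 𝒯 T}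

/-- The `e`-spectrum of `𝒯`: the cardinality of the set of accumulation points of `𝒯`. -/
noncomputable def eSp (𝒯 : Set (CTheory L)) : Cardinal :=
  Cardinal.mk {T : CTheory L // IsAccPoint 𝒯 T}

/-- Two sentences are inconsistent if `{φ, ψ}` is unsatisfiable. -/
def Inconsistent (φ ψ : L.Sentence) : Prop :=
  ¬ FirstOrder.Language.Theory.IsSatisfiable ({φ, ψ} : L.Theory)

open Classical in
/-- `RSge α 𝒯` says `RS(𝒯) ≥ α`: `RS(𝒯) ≥ 0` iff `𝒯 ≠ ∅`; `RS(𝒯) ≥ 1` iff `𝒯` is infinite;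
for `β ≥ 1`, `RS(𝒯) ≥ β + 1` iff there are pairwise inconsistent sentences `φ_n`, `n ∈ ℕ`,
with `RS(𝒯_{φ_n}) ≥ β` for all `n`; for limit `λ`, `RS(𝒯) ≥ λ` iff `RS(𝒯) ≥ β` for all
`β < λ`. -/
noncomputable def RSge (α : Ordinal.{w}) : Set (CTheory L) → Prop :=
  @Ordinal.limitRecOn (fun _ => Set (CTheory L) → Prop) α
    (fun 𝒯 => 𝒯.Nonempty)
    (fun β ih 𝒯 =>
      if β = 0 then 𝒯.Infinite
      else ∃ φ : ℕ → L.Sentence,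
        (∀ m n : ℕ, m ≠ n → Inconsistent (φ m) (φ n)) ∧ ∀ k : ℕ, ih (nbhd 𝒯 (φ k)))
    (fun β _ ih 𝒯 => ∀ γ : Ordinal, ∀ h : γ < β, ih γ h 𝒯)

/-- `RS(𝒯) = α` for an ordinal `α`: `RS(𝒯) ≥ α` but not `RS(𝒯) ≥ α + 1`. -/
def RSeq (𝒯 : Set (CTheory L)) (α : Ordinal.{w}) : Prop :=
  RSge α 𝒯 ∧ ¬ RSge (α + 1) 𝒯

/-- `RS(𝒯) = ∞`: `RS(𝒯) ≥ α` for every ordinal `α`. -/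
def RSinf (𝒯 : Set (CTheory L)) : Prop :=
  ∀ α : Ordinal.{w}, RSge α 𝒯

/-- `ds(𝒯) = n` (relative to `RS(𝒯) = α`): `n` is the largest natural number for which
there exist `n` pairwise inconsistent sentences `φ_1, …, φ_n` with `RS(𝒯_{φ_i}) = α`. -/
def dsEq (𝒯 : Set (CTheory L)) (α : Ordinal.{w}) (n : ℕ) : Prop :=
  IsGreatest {m : ℕ | ∃ φ : Fin m → L.Sentence,
    (∀ i j : Fin m, i ≠ j → Inconsistent (φ i) (φ j)) ∧
    ∀ i : Fin m, RSeq (nbhd 𝒯 (φ i)) α} n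

/-- `𝒯` is `e`-minimal: for every sentence `φ`, `𝒯_φ` is finite or `𝒯_{¬φ}` is finite. -/
def EMinimal (𝒯 : Set (CTheory L)) : Prop :=
  ∀ φ : L.Sentence, (nbhd 𝒯 φ).Finite ∨ (nbhd 𝒯 φ.not).Finite

/-- `𝒯` is `a`-minimal: `𝒯` has infinitely many accumulation points and for every sentence
`φ`, `𝒯_φ` or `𝒯_{¬φ}` has only finitely many accumulation points. -/
def AMinimal (𝒯 : Set (CTheory L)) : Prop :=
  {T : CTheory L | IsAccPoint 𝒯 T}.Infinite ∧
  ∀ φ : L.Sentence,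
    {T : CTheory L | IsAccPoint (nbhd 𝒯 φ) T}.Finite ∨
    {T : CTheory L | IsAccPoint (nbhd 𝒯 φ.not) T}.Finite

/-- `𝒯` is `α`-minimal: `RS(𝒯) = α` and for every sentence `φ`, `RS(𝒯_φ) < α` or
`RS(𝒯_{¬φ}) < α`. -/
def AlphaMinimal (𝒯 : Set (CTheory L)) (α : Ordinal.{w}) : Prop :=
  RSeq 𝒯 α ∧
  ∀ φ : L.Sentence, ¬ RSge α (nbhd 𝒯 φ) ∨ ¬ RSge α (nbhd 𝒯 φ.not)

/-! The `E`-closure commutes with restriction to a sentence, `(Cl_E 𝒯)_φ = Cl_E (𝒯_φ)`, and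
preserves being nonempty and being infinite. Since the rank is built from exactly these three
ingredients, induction on `α` gives `RS(𝒯) ≥ α ↔ RS(Cl_E 𝒯) ≥ α`. The degree only involves the
ranks of the sets `𝒯_φ`, so it is unchanged as well. -/

namespace CTheory

variable (T : CTheory L)

theorem not_mem_iff (φ : L.Sentence) : φ.not ∈ T.1 ↔ φ ∉ T.1 := by
  rw [T.2.mem_iff_models, T.2.mem_iff_models, T.2.isComplete.models_not_iff]

theorem inf_mem_iff (φ ψ : L.Sentence) : φ ⊓ ψ ∈ T.1 ↔ φ ∈ T.1 ∧ ψ ∈ T.1 := by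
  simp only [T.2.mem_iff_models, Theory.models_sentence_iff, Sentence.realize_inf, forall_and]

theorem top_mem : (⊤ : L.Sentence) ∈ T.1 :=
  T.2.mem_of_models (Theory.models_sentence_iff.2 fun M => Sentence.realize_top M)

end CTheory

variable {𝒯 𝒮 : Set (CTheory L)} {T : CTheory L}

@[simp]
theorem mem_nbhd {φ : L.Sentence} : T ∈ nbhd 𝒯 φ ↔ T ∈ 𝒯 ∧ φ ∈ T.1 :=
  Iff.rfl

@[simp]
theorem mem_clE : T ∈ ClE 𝒯 ↔ T ∈ 𝒯 ∨ IsAccPoint 𝒯 T :=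
  Iff.rfl

theorem nbhd_subset (𝒯 : Set (CTheory L)) (φ : L.Sentence) : nbhd 𝒯 φ ⊆ 𝒯 :=
  fun _ h => h.1

theorem nbhd_nbhd (𝒯 : Set (CTheory L)) (φ ψ : L.Sentence) :
    nbhd (nbhd 𝒯 φ) ψ = nbhd 𝒯 (φ ⊓ ψ) := by
  ext S
  simp only [mem_nbhd, S.inf_mem_iff, and_assoc]

theorem nbhd_nbhd_not (𝒯 : Set (CTheory L)) (φ : L.Sentence) : nbhd (nbhd 𝒯 φ) φ.not = ∅ :=
  Set.eq_empty_of_forall_notMem fun S ⟨⟨_, hφ⟩, hnφ⟩ => (S.not_mem_iff φ).1 hnφ hφ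

theorem IsAccPoint.mono (h𝒯 : 𝒯 ⊆ 𝒮) (hT : IsAccPoint 𝒯 T) : IsAccPoint 𝒮 T :=
  fun φ hφ => (hT φ hφ).mono fun _ hS => ⟨h𝒯 hS.1, hS.2⟩

theorem IsAccPoint.mem_of_nbhd {φ : L.Sentence} (hT : IsAccPoint (nbhd 𝒯 φ) T) : φ ∈ T.1 := by
  by_contra hφ
  have := hT φ.not ((T.not_mem_iff φ).2 hφ)
  rw [nbhd_nbhd_not] at this
  exact this Set.finite_empty

theorem isAccPoint_nbhd_iff {φ : L.Sentence} :
    IsAccPoint (nbhd 𝒯 φ) T ↔ IsAccPoint 𝒯 T ∧ φ ∈ T.1 := by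
  refine ⟨fun hT => ⟨hT.mono (nbhd_subset 𝒯 φ), hT.mem_of_nbhd⟩, fun ⟨hT, hφ⟩ ψ hψ => ?_⟩
  rw [nbhd_nbhd]
  exact hT _ ((T.inf_mem_iff φ ψ).2 ⟨hφ, hψ⟩)

theorem nbhd_clE (𝒯 : Set (CTheory L)) (φ : L.Sentence) :
    nbhd (ClE 𝒯) φ = ClE (nbhd 𝒯 φ) := by
  ext S
  simp only [mem_nbhd, mem_clE, isAccPoint_nbhd_iff, or_and_right]

theorem IsAccPoint.nonempty (hT : IsAccPoint 𝒯 T) : 𝒯.Nonempty :=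
  (hT ⊤ T.top_mem).nonempty.mono (nbhd_subset 𝒯 ⊤)

theorem clE_nonempty_iff : (ClE 𝒯).Nonempty ↔ 𝒯.Nonempty :=
  ⟨fun ⟨_, hT⟩ => hT.elim (fun h => ⟨_, h⟩) IsAccPoint.nonempty,
    fun h => h.mono Set.subset_union_left⟩

theorem IsAccPoint.infinite (hT : IsAccPoint 𝒯 T) : 𝒯.Infinite :=
  (hT ⊤ T.top_mem).mono (nbhd_subset 𝒯 ⊤)

theorem clE_eq_self_of_finite (h𝒯 : 𝒯.Finite) : ClE 𝒯 = 𝒯 :=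
  Set.union_eq_left.2 fun _ hT => absurd h𝒯 (IsAccPoint.infinite hT)

theorem clE_infinite_iff : (ClE 𝒯).Infinite ↔ 𝒯.Infinite :=
  ⟨fun h h𝒯 => h (by rwa [clE_eq_self_of_finite h𝒯]), fun h => h.mono Set.subset_union_left⟩

theorem rsge_zero_iff : RSge (0 : Ordinal.{w}) 𝒯 ↔ 𝒯.Nonempty := by
  rw [RSge, Ordinal.limitRecOn_zero]

theorem rsge_one_iff : RSge (0 + 1 : Ordinal.{w}) 𝒯 ↔ 𝒯.Infinite := by
  rw [RSge, Ordinal.limitRecOn_add_one, if_pos rfl]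

theorem rsge_add_one_iff {β : Ordinal.{w}} (hβ : β ≠ 0) :
    RSge (β + 1) 𝒯 ↔ ∃ φ : ℕ → L.Sentence,
      (∀ m n : ℕ, m ≠ n → Inconsistent (φ m) (φ n)) ∧ ∀ k : ℕ, RSge β (nbhd 𝒯 (φ k)) := by
  rw [RSge, Ordinal.limitRecOn_add_one, if_neg hβ]
  rfl

theorem rsge_iff_of_isSuccLimit {β : Ordinal.{w}} (hβ : Order.IsSuccLimit β) :
    RSge β 𝒯 ↔ ∀ γ < β, RSge γ 𝒯 := by
  rw [RSge, Ordinal.limitRecOn_limit _ _ _ _ hβ]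
  rfl

theorem rsge_clE_iff (α : Ordinal.{w}) (𝒯 : Set (CTheory L)) :
    RSge α (ClE 𝒯) ↔ RSge α 𝒯 := by
  induction α using Ordinal.limitRecOn generalizing 𝒯 with
  | zero => rw [rsge_zero_iff, rsge_zero_iff, clE_nonempty_iff]
  | add_one β ih =>
    rcases eq_or_ne β 0 with rfl | hβ
    · rw [rsge_one_iff, rsge_one_iff, clE_infinite_iff]
    · simp only [rsge_add_one_iff hβ, nbhd_clE, ih]
  | limit β hβ ih =>
    rw [rsge_iff_of_isSuccLimit hβ, rsge_iff_of_isSuccLimit hβ]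
    exact forall₂_congr fun γ hγ => ih γ hγ 𝒯

theorem rseq_clE_iff {α : Ordinal.{w}} : RSeq (ClE 𝒯) α ↔ RSeq 𝒯 α := by
  rw [RSeq, RSeq, rsge_clE_iff, rsge_clE_iff]

theorem dsEq_clE_iff {α : Ordinal.{w}} {n : ℕ} : dsEq (ClE 𝒯) α n ↔ dsEq 𝒯 α n := by
  simp only [dsEq, nbhd_clE, rseq_clE_iff]

/-- Theorem 2.10: for any family `𝒯`, `RS(𝒯) = RS(Cl_E(𝒯))` (i.e. the rank
relations `RS(·) ≥ α` coincide for all ordinals `α`); moreover, if `𝒯` is nonempty and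
`e`-totally transcendental, with `RS(𝒯) = α`, then `ds(𝒯) = ds(Cl_E(𝒯))`. -/
theorem rank_degree_clE (𝒯 : Set (CTheory L)) :
    (∀ α : Ordinal.{w}, RSge α 𝒯 ↔ RSge α (ClE 𝒯)) ∧
    (𝒯.Nonempty → ∀ α : Ordinal.{w}, RSeq 𝒯 α →
      ∀ n : ℕ, (dsEq 𝒯 α n ↔ dsEq (ClE 𝒯) α n)) :=
  ⟨fun α => (rsge_clE_iff α 𝒯).symm, fun _ _ _ _ => dsEq_clE_iff.symm⟩
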